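/- arXiv:1505.06422 — 2 statements merged into one kernel-verified Lean document; each statement's English description precedes it below -/
import Mathlib

section
/- Let B_{ij} ∈ M(d,ℂ) for i,j = 1,…,n be matrices such that every B_{ij} is normal and any two of them commute, and suppose the block matrix T = ∑_{i,j=1}^n E_{ij} ⊗ B_{ij} is positive semidefinite. Then T admits a separable decomposition with at most n·d rank-one product terms: there exist nonnegative reals λ_j^k and vectors v_j^k ∈ ℂ^n, u_k ∈ ℂ^d (k = 1,…,d, j = 0,…,n−1) such that T = ∑_{k=1}^d ∑_{j=0}^{n−1} λ_j^k (v_j^k (v_j^k)†) ⊗ (u_k u_k†). -/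
/-!
Since `T` is Hermitian, `(B i j)ᴴ = B j i`, so the blocks form a commuting family closed under
`ᴴ`. Their real and imaginary parts are then commuting Hermitian matrices, which share an
orthonormal eigenbasis `u k` (the columns of a unitary `U`). Hence
`B i j = ∑ k, β i j k • u k (u k)ᴴ` and `T = ∑ k, C k ⊗ u k (u k)ᴴ` with `C k = (β i j k)ᵢⱼ`.
Conjugating `T` by `1 ⊗ U` turns it into `∑ k, C k ⊗ E k k`, of which `C k` is a principal
submatrix, so every `C k` is positive semidefinite; the spectral decomposition of `C k` into
`n` nonnegative multiples of rank-one projections gives the terms for the index `k`.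
-/

open Matrix Kronecker
open scoped ComplexOrder
open scoped Function

open Module.End in
theorem LinearMap.IsSymmetric.exists_orthonormalBasis_eigenvectors_of_pairwise_commute
    {𝕜 E ι κ : Type*} [RCLike 𝕜] [NormedAddCommGroup E] [InnerProductSpace 𝕜 E]
    [FiniteDimensional 𝕜 E] [Fintype κ] (hκ : Module.finrank 𝕜 E = Fintype.card κ)
    {T : ι → E →ₗ[𝕜] E} (hT : ∀ i, (T i).IsSymmetric) (hC : Pairwise (Commute on T)) :
    ∃ b : OrthonormalBasis κ 𝕜 E, ∀ i k, ∃ μ : 𝕜, T i (b k) = μ • b k := by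
  classical
  let V : (ι → 𝕜) → Submodule 𝕜 E := fun χ => ⨅ i, eigenspace (T i) (χ i)
  have hV : DirectSum.IsInternal V := directSum_isInternal_of_pairwise_commute hT hC
  -- only finitely many joint eigenspaces are nonzero, and the basis needs a finite index
  have : Finite {χ // V χ ≠ ⊥} :=
    (WellFoundedGT.finite_ne_bot_of_iSupIndep hV.submodule_iSupIndep).to_subtype
  have := Fintype.ofFinite {χ // V χ ≠ ⊥}
  have hV' : DirectSum.IsInternal fun χ : {χ // V χ ≠ ⊥} => V χ :=
    DirectSum.isInternal_ne_bot_iff.mpr hV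
  have horth := (orthogonalFamily_iInf_eigenspaces hT).comp
    (Subtype.val_injective (p := fun χ => V χ ≠ ⊥))
  refine ⟨(hV'.subordinateOrthonormalBasis hκ horth).reindex (Fintype.equivFin κ).symm,
    fun i k => ⟨(hV'.subordinateOrthonormalBasisIndex hκ (Fintype.equivFin κ k) horth).1 i, ?_⟩⟩
  have hmem := hV'.subordinateOrthonormalBasis_subordinate hκ (Fintype.equivFin κ k) horth
  simp only [OrthonormalBasis.reindex_apply, Equiv.symm_symm]
  exact mem_eigenspace_iff.mp ((Submodule.mem_iInf _).mp hmem i)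

section ComplexStarModule

open ComplexStarModule

variable {A : Type*} [Ring A] [StarRing A] [Algebra ℂ A] [StarModule ℂ A] {a b : A}

theorem Commute.realPart_left (h : Commute a b) (h' : Commute (star a) b) :
    Commute (ℜ a : A) b := by
  rw [realPart_apply_coe]
  exact (h.add_left h').smul_left _

theorem Commute.imaginaryPart_left (h : Commute a b) (h' : Commute (star a) b) :
    Commute (ℑ a : A) b := by
  rw [imaginaryPart_apply_coe]
  exact ((h.sub_left h').smul_left _).smul_left _

end ComplexStarModule

namespace Matrix

section Blocks

variable {α l m n p : Type*}

theorem sum_single_kronecker_apply [Semiring α] [Fintype n] [DecidableEq n]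
    (M : n → n → Matrix l p α) (a c : n) (b : l) (e : p) :
    (∑ i, ∑ j, single i j (1 : α) ⊗ₖ M i j) (a, b) (c, e) = M a c b e := by
  simp [sum_apply, kroneckerMap_apply, single_apply, ite_and]

theorem sum_single_kronecker_sum_smul [CommSemiring α] [Fintype m] [Fintype n]
    [DecidableEq n] (β : n → n → m → α) (P : m → Matrix l p α) :
    ∑ i, ∑ j, single i j (1 : α) ⊗ₖ ∑ k, β i j k • P k =
      ∑ k, of (fun i j => β i j k) ⊗ₖ P k := by
  ext ⟨a, b⟩ ⟨c, e⟩
  rw [sum_single_kronecker_apply]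
  simp [sum_apply, kroneckerMap_apply]

theorem conjTranspose_eq_of_isHermitian_sum_single_kronecker [CommSemiring α] [StarRing α]
    [Fintype n] [DecidableEq n] {M : n → n → Matrix l l α}
    (h : (∑ i, ∑ j, single i j (1 : α) ⊗ₖ M i j).IsHermitian) (i j : n) :
    (M i j)ᴴ = M j i := by
  ext a b
  simpa [sum_single_kronecker_apply] using congr_fun (congr_fun h (j, a)) (i, b)

theorem sum_kronecker [NonUnitalNonAssocSemiring α] {ι : Type*} (s : Finset ι)
    (A : ι → Matrix l m α) (B : Matrix n p α) :
    (∑ i ∈ s, A i) ⊗ₖ B = ∑ i ∈ s, A i ⊗ₖ B := by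
  ext
  simp [sum_apply, kroneckerMap_apply, Finset.sum_mul]

end Blocks

variable {m n : Type*} [Fintype m] [DecidableEq m]

theorem mul_diagonal_mul_conjTranspose_eq_sum_vecMulVec {α : Type*} [CommSemiring α]
    [StarRing α] (U : Matrix n m α) (d : m → α) :
    U * diagonal d * Uᴴ = ∑ k, d k • vecMulVec (U.col k) (star (U.col k)) := by
  ext a b
  rw [mul_apply]
  simp only [mul_diagonal, conjTranspose_apply, sum_apply, smul_apply,
    vecMulVec_apply, col_apply, Pi.star_apply, smul_eq_mul]
  exact Finset.sum_congr rfl fun k _ => by ring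

theorem mul_eq_mul_diagonal_of_mulVec_col {α : Type*} [CommSemiring α] {A : Matrix n n α}
    [Fintype n] {U : Matrix n m α} {μ : m → α} (h : ∀ k, A *ᵥ U.col k = μ k • U.col k) :
    A * U = U * diagonal μ := by
  ext a k
  rw [mul_diagonal, ← col_apply U k a, mul_comm, ← smul_eq_mul, ← Pi.smul_apply, ← h]
  rfl

theorem exists_unitary_diagonal_of_isHermitian_of_commute {𝕜 ι : Type*} [RCLike 𝕜]
    {A : ι → Matrix m m 𝕜} (hA : ∀ i, (A i).IsHermitian) (hC : ∀ i j, Commute (A i) (A j)) :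
    ∃ U ∈ unitaryGroup m 𝕜, ∃ β : ι → m → 𝕜, ∀ i, A i = U * diagonal (β i) * Uᴴ := by
  have hcomm : Pairwise (Commute on fun i => toEuclideanLin (A i)) := fun i j _ => by
    simp only [Commute, SemiconjBy, Module.End.mul_eq_comp, ← toLpLin_mul, (hC i j).eq]
  obtain ⟨b, hb⟩ :=
    LinearMap.IsSymmetric.exists_orthonormalBasis_eigenvectors_of_pairwise_commute
      (E := EuclideanSpace 𝕜 m) (κ := m) finrank_euclideanSpace
      (fun i => isSymmetric_toEuclideanLin_iff.mpr (hA i)) hcomm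
  obtain ⟨U, hU, hcol⟩ : ∃ U ∈ unitaryGroup m 𝕜, ∀ k, U.col k = b k :=
    ⟨_, (EuclideanSpace.basisFun m 𝕜).toMatrix_orthonormalBasis_mem_unitary b, fun _ => rfl⟩
  have hUU : U * Uᴴ = 1 := by
    rw [← star_eq_conjTranspose]
    exact mem_unitaryGroup_iff.mp hU
  choose β hβ using hb
  refine ⟨U, hU, β, fun i => ?_⟩
  have hAU : A i * U = U * diagonal (β i) := by
    refine mul_eq_mul_diagonal_of_mulVec_col fun k => ?_
    have h := congr_arg WithLp.ofLp (hβ i k)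
    rw [ofLp_toLpLin, toLin'_apply, WithLp.ofLp_smul] at h
    rw [hcol]
    exact h
  rw [← mul_one (A i), ← hUU, ← mul_assoc, hAU]

open ComplexStarModule in
theorem exists_unitary_diagonal_of_commute_of_commute_conjTranspose {ι : Type*}
    {B : ι → Matrix m m ℂ} (hC : ∀ i j, Commute (B i) (B j)) (hCH : ∀ i j, Commute (B i) (B j)ᴴ) :
    ∃ U ∈ unitaryGroup m ℂ, ∃ β : ι → m → ℂ, ∀ i, B i = U * diagonal (β i) * Uᴴ := by
  let A : ι ⊕ ι → Matrix m m ℂ := Sum.elim (fun i => ℜ (B i)) (fun i => ℑ (B i))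
  have hA : ∀ p, (A p).IsHermitian := by
    rintro (i | i)
    exacts [(ℜ (B i)).2, (ℑ (B i)).2]
  have hcomm_A : ∀ x : Matrix m m ℂ, (∀ j, Commute x (B j) ∧ Commute x (star (B j))) →
      ∀ q, Commute x (A q) := by
    rintro x hx (j | j)
    exacts [((hx j).1.symm.realPart_left (hx j).2.symm).symm,
      ((hx j).1.symm.imaginaryPart_left (hx j).2.symm).symm]
  have hB : ∀ i q, Commute (B i) (A q) := fun i => hcomm_A _ fun j => ⟨hC i j, hCH i j⟩
  have hBH : ∀ i q, Commute (star (B i)) (A q) :=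
    fun i => hcomm_A _ fun j => ⟨(hCH j i).symm, (hC i j).star_star⟩
  obtain ⟨U, hU, β, hβ⟩ := exists_unitary_diagonal_of_isHermitian_of_commute hA <| by
    rintro (i | i) q
    exacts [(hB i q).realPart_left (hBH i q), (hB i q).imaginaryPart_left (hBH i q)]
  refine ⟨U, hU, fun i => β (.inl i) + Complex.I • β (.inr i), fun i => ?_⟩
  rw [← realPart_add_I_smul_imaginaryPart (B i)]
  change A (.inl i) + Complex.I • A (.inr i) = _
  rw [hβ, hβ, ← Matrix.smul_mul, ← Matrix.mul_smul, ← Matrix.add_mul, ← Matrix.mul_add,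
    ← diagonal_smul, diagonal_add]
  rfl

theorem PosSemidef.exists_eq_sum_smul_vecMulVec {𝕜 : Type*} [RCLike 𝕜] {A : Matrix m m 𝕜}
    (hA : A.PosSemidef) :
    ∃ (lam : m → ℝ) (v : m → m → 𝕜), (∀ j, 0 ≤ lam j) ∧
      A = ∑ j, (lam j : 𝕜) • vecMulVec (v j) (star (v j)) := by
  refine ⟨hA.1.eigenvalues, (hA.1.eigenvectorUnitary : Matrix m m 𝕜).col,
    hA.eigenvalues_nonneg, ?_⟩
  conv_lhs => rw [hA.1.spectral_theorem, Unitary.conjStarAlgAut_apply, star_eq_conjTranspose,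
    mul_diagonal_mul_conjTranspose_eq_sum_vecMulVec]
  rfl

theorem PosSemidef.of_sum_kronecker_vecMulVec_col {𝕜 : Type*} [RCLike 𝕜] [Fintype n]
    [DecidableEq n] {U : Matrix m m 𝕜} (hU : U ∈ unitaryGroup m 𝕜) {C : m → Matrix n n 𝕜}
    (h : (∑ k, C k ⊗ₖ vecMulVec (U.col k) (star (U.col k))).PosSemidef) (k : m) :
    (C k).PosSemidef := by
  have hUU : Uᴴ * U = 1 := by
    rw [← star_eq_conjTranspose]
    exact mem_unitaryGroup_iff'.mp hU
  have hP : ∀ k, Uᴴ * vecMulVec (U.col k) (star (U.col k)) * U = single k k 1 := by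
    intro k
    rw [mul_vecMulVec, vecMulVec_mul, ← mulVec_single_one, star_mulVec, vecMul_vecMul,
      mulVec_mulVec, hUU, one_mulVec, vecMul_one, single_eq_single_vecMulVec_single]
    simp
  let V : Matrix (n × m) (n × m) 𝕜 := 1 ⊗ₖ U
  have hconj : Vᴴ * (∑ k, C k ⊗ₖ vecMulVec (U.col k) (star (U.col k))) * V
      = ∑ k, C k ⊗ₖ single k k 1 := by
    simp only [V, conjTranspose_kronecker, conjTranspose_one, Finset.mul_sum, Finset.sum_mul,
      ← mul_kronecker_mul, Matrix.one_mul, Matrix.mul_one, hP]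
  have hblock : (∑ k, C k ⊗ₖ single k k (1 : 𝕜)).submatrix (·, k) (·, k) = C k := by
    ext a c
    simp [sum_apply, kroneckerMap_apply, single_apply]
  rw [← hblock, ← hconj]
  exact (h.conjTranspose_mul_mul_same V).submatrix _

end Matrix

theorem separable_decomposition_of_normal_commuting_general {n d : ℕ}
    (B : Fin n → Fin n → Matrix (Fin d) (Fin d) ℂ)
    (hcomm : ∀ i j i' j' : Fin n, B i j * B i' j' = B i' j' * B i j)
    (hT : (∑ i : Fin n, ∑ j : Fin n,
        (Matrix.single i j (1 : ℂ)) ⊗ₖ (B i j)).PosSemidef) :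
    ∃ (lam : Fin d → Fin n → ℝ) (v : Fin d → Fin n → Fin n → ℂ)
      (u : Fin d → Fin d → ℂ),
      (∀ k j, 0 ≤ lam k j) ∧
      (∑ i : Fin n, ∑ j : Fin n, (Matrix.single i j (1 : ℂ)) ⊗ₖ (B i j))
        = ∑ k : Fin d, ∑ j : Fin n,
            (lam k j : ℂ) •
              (Matrix.vecMulVec (v k j) (star (v k j)) ⊗ₖ
                Matrix.vecMulVec (u k) (star (u k))) := by
  obtain ⟨U, hU, β, hB⟩ := exists_unitary_diagonal_of_commute_of_commute_conjTranspose
    (B := fun p : Fin n × Fin n => B p.1 p.2) (fun p q => hcomm _ _ _ _) fun p q => by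
      rw [conjTranspose_eq_of_isHermitian_sum_single_kronecker hT.1]
      exact hcomm _ _ _ _
  let C : Fin d → Matrix (Fin n) (Fin n) ℂ := fun k => of fun i j => β (i, j) k
  have hT_eq : ∑ i, ∑ j, single i j (1 : ℂ) ⊗ₖ B i j
      = ∑ k, C k ⊗ₖ vecMulVec (U.col k) (star (U.col k)) := by
    simp_rw [fun i j => hB (i, j), mul_diagonal_mul_conjTranspose_eq_sum_vecMulVec]
    exact sum_single_kronecker_sum_smul _ _
  have hC : ∀ k, (C k).PosSemidef := (hT_eq ▸ hT).of_sum_kronecker_vecMulVec_col hU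
  choose lam v hlam hv using fun k => (hC k).exists_eq_sum_smul_vecMulVec
  refine ⟨lam, v, U.col, hlam, ?_⟩
  rw [hT_eq]
  refine Finset.sum_congr rfl fun k _ => ?_
  rw [hv k, sum_kronecker]
  simp_rw [smul_kronecker]
  rfl

/-- a positive semidefinite block matrix with normal, mutually
commuting blocks has a separable decomposition with at most `n·d` rank-one
product terms. -/
theorem separable_decomposition_of_normal_commuting {n d : ℕ}
    (B : Fin n → Fin n → Matrix (Fin d) (Fin d) ℂ)
    (hnormal : ∀ i j : Fin n, B i j * (B i j)ᴴ = (B i j)ᴴ * B i j)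
    (hcomm : ∀ i j i' j' : Fin n, B i j * B i' j' = B i' j' * B i j)
    (hT : (∑ i : Fin n, ∑ j : Fin n,
        (Matrix.single i j (1 : ℂ)) ⊗ₖ (B i j)).PosSemidef) :
    ∃ (lam : Fin d → Fin n → ℝ) (v : Fin d → Fin n → Fin n → ℂ)
      (u : Fin d → Fin d → ℂ),
      (∀ k j, 0 ≤ lam k j) ∧
      (∑ i : Fin n, ∑ j : Fin n, (Matrix.single i j (1 : ℂ)) ⊗ₖ (B i j))
        = ∑ k : Fin d, ∑ j : Fin n,
            (lam k j : ℂ) •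
              (Matrix.vecMulVec (v k j) (star (v k j)) ⊗ₖ
                Matrix.vecMulVec (u k) (star (u k))) :=
  separable_decomposition_of_normal_commuting_general B hcomm hT
end

section
/- Let B ∈ M(d,ℂ) be a normal matrix and let P_{ij} ∈ ℂ[x] for i,j = 1,…,n be arbitrary polynomials. Then the block matrix T = ∑_{i,j=1}^n E_{ij} ⊗ P_{ij}(B) ∈ M(nd,ℂ) is separable if and only if it is positive semidefinite. -/
/-!
A normal matrix is unitarily diagonalisable, `B = U diag(μ) U*`, so every block `P_ij(B)` equals
`U diag(P_ij(μ)) U*` and `T` is the conjugate by the local unitary `1 ⊗ U` of the block matrix `T'`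
whose blocks are the diagonal matrices `diag(P_ij(μ))`. Conjugation by `1 ⊗ U` preserves both
separability and positive semidefiniteness, and `T' = ∑ₖ Aₖ ⊗ eₖeₖᵀ`, where `Aₖ = (P_ij(μₖ))_ij`
is a principal submatrix of `T'`, hence positive semidefinite as soon as `T'` is.
-/

open Matrix Kronecker Polynomial
open scoped ComplexOrder

/-- A matrix in `M(nd,ℂ)` is separable if it is a finite sum of Kronecker
products of positive semidefinite matrices. -/
def MatSeparable {n d : ℕ} (T : Matrix (Fin n × Fin d) (Fin n × Fin d) ℂ) : Prop :=
  ∃ (s : ℕ) (P : Fin s → Matrix (Fin n) (Fin n) ℂ)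
    (Q : Fin s → Matrix (Fin d) (Fin d) ℂ),
      (∀ i, (P i).PosSemidef) ∧ (∀ i, (Q i).PosSemidef) ∧
        T = ∑ i : Fin s, (P i) ⊗ₖ (Q i)

section OrthonormalEigenbasis

variable {𝕜 E : Type*} [RCLike 𝕜] [NormedAddCommGroup E] [InnerProductSpace 𝕜 E]
  [FiniteDimensional 𝕜 E] {n : ℕ}

theorem DirectSum.IsInternal.exists_orthonormalBasis_subordinate {ι : Type*} [DecidableEq ι]
    {V : ι → Submodule 𝕜 E} (hV : DirectSum.IsInternal V)
    (hV' : OrthogonalFamily 𝕜 (fun i => V i) fun i => (V i).subtypeₗᵢ)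
    (hn : Module.finrank 𝕜 E = n) :
    ∃ b : OrthonormalBasis (Fin n) 𝕜 E, ∀ k, ∃ i, b k ∈ V i := by
  have : Fintype {i // V i ≠ ⊥} :=
    (WellFoundedGT.finite_ne_bot_of_iSupIndep hV.submodule_iSupIndep).fintype
  have hV₀ := DirectSum.isInternal_ne_bot_iff.mpr hV
  have hV₀' := hV'.comp (Subtype.val_injective (p := fun i => V i ≠ ⊥))
  exact ⟨hV₀.subordinateOrthonormalBasis hn hV₀',
    fun k => ⟨_, hV₀.subordinateOrthonormalBasis_subordinate hn k hV₀'⟩⟩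

theorem LinearMap.IsSymmetric.exists_orthonormalBasis_eigenvectors_of_commute
    {A B : E →ₗ[𝕜] E} (hA : A.IsSymmetric) (hB : B.IsSymmetric) (hAB : Commute A B)
    (hn : Module.finrank 𝕜 E = n) :
    ∃ b : OrthonormalBasis (Fin n) 𝕜 E,
      ∀ k, ∃ α β : 𝕜, A (b k) = α • b k ∧ B (b k) = β • b k := by
  classical
  obtain ⟨b, hb⟩ := (hA.directSum_isInternal_of_commute hB hAB).exists_orthonormalBasis_subordinate
    (hA.orthogonalFamily_eigenspace_inf_eigenspace hB) hn
  refine ⟨b, fun k => ?_⟩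
  obtain ⟨⟨β, α⟩, hα, hβ⟩ := hb k
  exact ⟨α, β, Module.End.mem_eigenspace_iff.mp hα, Module.End.mem_eigenspace_iff.mp hβ⟩

end OrthonormalEigenbasis

/-- The eigenvectors are common eigenvectors of the commuting self-adjoint parts `ℜ T` and `ℑ T`. -/
theorem IsStarNormal.exists_orthonormalBasis_eigenvectors {E : Type*} [NormedAddCommGroup E]
    [InnerProductSpace ℂ E] [FiniteDimensional ℂ E] {n : ℕ} (T : E →L[ℂ] E) [IsStarNormal T]
    (hn : Module.finrank ℂ E = n) :
    ∃ (b : OrthonormalBasis (Fin n) ℂ E) (μ : Fin n → ℂ), ∀ k, T (b k) = μ k • b k := by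
  have hcomm := isStarNormal_iff_commute_realPart_imaginaryPart.mp ‹IsStarNormal T›
  obtain ⟨b, hb⟩ := (realPart T).2.isSymmetric.exists_orthonormalBasis_eigenvectors_of_commute
    (imaginaryPart T).2.isSymmetric (hcomm.map ContinuousLinearMap.toLinearMapRingHom) hn
  choose α β hα hβ using hb
  simp only [ContinuousLinearMap.coe_coe] at hα hβ
  refine ⟨b, fun k => α k + Complex.I * β k, fun k => ?_⟩
  conv_lhs => rw [← realPart_add_I_smul_imaginaryPart T]
  rw [_root_.add_apply, _root_.smul_apply, hα, hβ, smul_smul, ← add_smul]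

theorem Matrix.exists_unitary_eq_conj_diagonal_of_isStarNormal {n : Type*} [Fintype n]
    [DecidableEq n] (B : Matrix n n ℂ) [IsStarNormal B] :
    ∃ (U : unitaryGroup n ℂ) (μ : n → ℂ), B = Unitary.conjStarAlgAut ℂ _ U (diagonal μ) := by
  obtain ⟨b, μ, hb⟩ :=
    IsStarNormal.exists_orthonormalBasis_eigenvectors (toEuclideanCLM (𝕜 := ℂ) B)
      finrank_euclideanSpace
  set e := Fintype.equivFin n
  set b' := b.reindex e.symm
  let U : unitaryGroup n ℂ := ⟨(EuclideanSpace.basisFun n ℂ).toBasis.toMatrix b'.toBasis,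
    (EuclideanSpace.basisFun n ℂ).toMatrix_orthonormalBasis_mem_unitary b'⟩
  have hBU : B * U = U * diagonal (μ ∘ e) := by
    ext i j
    have hij := congr(WithLp.ofLp $(hb (e j)) i)
    simp only [ofLp_toEuclideanCLM, mulVec, dotProduct, PiLp.smul_apply, smul_eq_mul] at hij
    rw [mul_diagonal, mul_apply]
    simpa [U, b', Module.Basis.toMatrix_apply, mul_comm] using hij
  refine ⟨U, μ ∘ e, ?_⟩
  rw [Unitary.conjStarAlgAut_apply, ← hBU, mul_assoc, Unitary.mul_star_self_of_mem U.2, mul_one]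

theorem Polynomial.aeval_diagonal {R A n : Type*} [CommSemiring R] [Semiring A] [Algebra R A]
    [Fintype n] [DecidableEq n] (μ : n → A) (p : R[X]) :
    aeval (diagonal μ) p = diagonal fun k => aeval (μ k) p := by
  rw [← diagonalAlgHom_apply (R := R), aeval_algHom_apply, aeval_pi_apply, diagonalAlgHom_apply]

theorem Matrix.sum_single_kronecker_conj {R ι m : Type*} [CommSemiring R] [StarRing R]
    [Fintype ι] [DecidableEq ι] [Fintype m] (X : Matrix m m R) (M : ι → ι → Matrix m m R) :
    ∑ i, ∑ j, single i j (1 : R) ⊗ₖ (X * M i j * Xᴴ) =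
      (1 ⊗ₖ X) * (∑ i, ∑ j, single i j (1 : R) ⊗ₖ M i j) * (1 ⊗ₖ X)ᴴ := by
  simp only [Finset.mul_sum, Finset.sum_mul, conjTranspose_kronecker, conjTranspose_one,
    ← mul_kronecker_mul, one_mul, mul_one]

namespace MatSeparable

variable {n d : ℕ} {T : Matrix (Fin n × Fin d) (Fin n × Fin d) ℂ}

theorem posSemidef (hT : MatSeparable T) : T.PosSemidef := by
  obtain ⟨s, P, Q, hP, hQ, rfl⟩ := hT
  exact posSemidef_sum _ fun i _ => (hP i).kronecker (hQ i)

theorem kronecker_mul_mul_conjTranspose (hT : MatSeparable T) (X : Matrix (Fin n) (Fin n) ℂ)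
    (Y : Matrix (Fin d) (Fin d) ℂ) : MatSeparable ((X ⊗ₖ Y) * T * (X ⊗ₖ Y)ᴴ) := by
  obtain ⟨s, P, Q, hP, hQ, rfl⟩ := hT
  refine ⟨s, fun i => X * P i * Xᴴ, fun i => Y * Q i * Yᴴ,
    fun i => (hP i).mul_mul_conjTranspose_same X, fun i => (hQ i).mul_mul_conjTranspose_same Y, ?_⟩
  simp only [Finset.mul_sum, Finset.sum_mul, conjTranspose_kronecker, mul_kronecker_mul]

end MatSeparable

theorem matSeparable_of_posSemidef_diagonal_blocks {n d : ℕ} (f : Fin n → Fin n → Fin d → ℂ)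
    (hT : (∑ i, ∑ j, single i j (1 : ℂ) ⊗ₖ diagonal (f i j)).PosSemidef) :
    MatSeparable (∑ i, ∑ j, single i j (1 : ℂ) ⊗ₖ diagonal (f i j)) := by
  refine ⟨d, fun k => (∑ i, ∑ j, single i j (1 : ℂ) ⊗ₖ diagonal (f i j)).submatrix (·, k) (·, k),
    fun k => diagonal (Pi.single k 1), fun k => hT.submatrix _,
    fun k => posSemidef_diagonal_iff.mpr (Pi.single_nonneg.mpr zero_le_one), ?_⟩
  ext ⟨i, a⟩ ⟨j, b⟩
  simp [Matrix.sum_apply, single_apply, diagonal_apply, Pi.single_apply, ite_and]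

/-- for a normal matrix `B` and polynomials `P_{ij}`, the block
matrix with blocks `P_{ij}(B)` is separable iff it is positive semidefinite. -/
theorem separable_iff_posSemidef_polynomial_blocks {n d : ℕ}
    (B : Matrix (Fin d) (Fin d) ℂ)
    (hnormal : B * Bᴴ = Bᴴ * B)
    (P : Fin n → Fin n → Polynomial ℂ) :
    MatSeparable (∑ i : Fin n, ∑ j : Fin n,
        (Matrix.single i j (1 : ℂ)) ⊗ₖ (Polynomial.aeval B (P i j)))
      ↔ (∑ i : Fin n, ∑ j : Fin n,
          (Matrix.single i j (1 : ℂ)) ⊗ₖ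
            (Polynomial.aeval B (P i j))).PosSemidef := by
  have : IsStarNormal B := ⟨hnormal.symm⟩
  obtain ⟨U, μ, rfl⟩ := B.exists_unitary_eq_conj_diagonal_of_isStarNormal
  have hW : IsUnit ((1 : Matrix (Fin n) (Fin n) ℂ) ⊗ₖ (U : Matrix (Fin d) (Fin d) ℂ)) :=
    Unitary.isUnit_coe (U := ⟨_, kronecker_mem_unitary (one_mem _) U.2⟩)
  simp only [aeval_algHom_apply]
  simp only [aeval_diagonal, Unitary.conjStarAlgAut_apply, star_eq_conjTranspose,
    sum_single_kronecker_conj]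
  refine ⟨MatSeparable.posSemidef, fun hT => ?_⟩
  exact (matSeparable_of_posSemidef_diagonal_blocks _
    ((IsUnit.posSemidef_star_right_conjugate_iff hW).mp hT)).kronecker_mul_mul_conjTranspose _ _
end
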